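/- arXiv:0911.5475 — 2 statements merged into one kernel-verified Lean document; each statement's English description precedes it below -/
import Mathlib

section
/- If x is a biinfinite word in the subshift Σ(G) of a labelled graph G, then for any two presentations p, q of x in G, the projections π(p) and π(q) to the linking graph G/≈ eventually lie in the same component of G/≈ (and similarly they initially lie in a common component). -/
/-! Common definitions: labelled graphs, walks, follower sets, the linking
relation, subshifts over `ℤ → A`, chains, and attractors. -/

structure LGraph (A : Type) where
  V : Type
  E : Type
  [finV : Finite V]
  [finE : Finite E]
  s : E → V
  t : E → V
  lab : E → A

attribute [instance] LGraph.finV LGraph.finE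

namespace LGraph

variable {A : Type}

/-- `Walk G u v es` : the list of edges `es` forms a walk from `u` to `v`. -/
inductive Walk (G : LGraph A) : G.V → G.V → List G.E → Prop
  | nil (v : G.V) : Walk G v v []
  | cons {w : G.V} {es : List G.E} (e : G.E) (h : Walk G (G.t e) w es) :
      Walk G (G.s e) w (e :: es)

/-- There is an edge from `u` to `v`. -/
def EdgeRel (G : LGraph A) (u v : G.V) : Prop := ∃ e : G.E, G.s e = u ∧ G.t e = v

/-- `v` is reachable from `u` by a directed walk. -/
def Reach (G : LGraph A) : G.V → G.V → Prop := Relation.ReflTransGen G.EdgeRel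

/-- `u` and `v` lie in the same strongly connected component. -/
def SameComp (G : LGraph A) (u v : G.V) : Prop := G.Reach u v ∧ G.Reach v u

/-- The number of strongly connected components of `G`. -/
noncomputable def numComponents (G : LGraph A) : ℕ :=
  Nat.card {K : Set G.V // ∃ v : G.V, K = {u : G.V | G.SameComp v u}}

/-- The restricted follower set of `v` : words labelling walks starting at `v`
that stay inside the strongly connected component of `v`. -/
def FollowR (G : LGraph A) (v : G.V) : Set (List A) :=
  {w | ∃ (u : G.V) (es : List G.E), G.Walk v u es ∧ es.map G.lab = w ∧
        ∀ e ∈ es, G.SameComp v (G.s e) ∧ G.SameComp v (G.t e)}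

/-- Two vertices are linked iff their restricted follower sets have infinite
intersection. -/
def Linked (G : LGraph A) (u v : G.V) : Prop := (G.FollowR u ∩ G.FollowR v).Infinite

/-- `≈` : the reflexive-transitive closure of the linked relation. -/
def Approx (G : LGraph A) : G.V → G.V → Prop := Relation.ReflTransGen G.Linked

/-- One step in the linking graph `G/≈` (lifted to `G`): either an edge of `G`
or a jump between linked vertices. -/
def GenStep (G : LGraph A) (u v : G.V) : Prop := G.EdgeRel u v ∨ G.Linked u v

/-- Reachability in the linking graph `G/≈`, expressed on vertices of `G`. -/
def GenReach (G : LGraph A) : G.V → G.V → Prop := Relation.ReflTransGen G.GenStep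

/-- The language of `G` : words labelling finite walks in `G`. -/
def Lang (G : LGraph A) : Set (List A) :=
  {w | ∃ (u v : G.V) (es : List G.E), G.Walk u v es ∧ es.map G.lab = w}

/-- `w` has a presentation in the subgraph of `G` induced by the vertex set `S`. -/
def PresIn (G : LGraph A) (S : Set G.V) (w : List A) : Prop :=
  ∃ (u v : G.V) (es : List G.E), G.Walk u v es ∧ es.map G.lab = w ∧
    u ∈ S ∧ v ∈ S ∧ ∀ e ∈ es, G.s e ∈ S ∧ G.t e ∈ S

/-- A presentation of the first `n` letters of `w`, with explicit vertex
sequence `v` and edge sequence `e`. -/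
def PresFun (G : LGraph A) (n : ℕ) (w : ℕ → A) (v : ℕ → G.V) (e : ℕ → G.E) : Prop :=
  ∀ i < n, G.s (e i) = v i ∧ G.t (e i) = v (i + 1) ∧ G.lab (e i) = w i

/-- `S` is a union of `≈`-equivalence classes, i.e. `S = π⁻¹(π(S))` for the
projection `π : G → G/≈`. -/
def SaturatedSet (G : LGraph A) (S : Set G.V) : Prop :=
  ∀ u v : G.V, G.Approx u v → (u ∈ S ↔ v ∈ S)

/-- No edge leaves `S` : together with saturation this says that the image of
`S` in `G/≈` is a terminal subgraph. -/
def ForwardClosed (G : LGraph A) (S : Set G.V) : Prop :=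
  ∀ e : G.E, G.s e ∈ S → G.t e ∈ S

/-- Every vertex has an ingoing and an outgoing edge. -/
def Essential (G : LGraph A) : Prop :=
  ∀ v : G.V, (∃ e : G.E, G.t e = v) ∧ (∃ e : G.E, G.s e = v)

/-- A biinfinite presentation of `x` (vertex sequence `v`, edge sequence `e`)
staying in the vertex set `S`. -/
def BiPresIn (G : LGraph A) (S : Set G.V) (x : ℤ → A) (v : ℤ → G.V) (e : ℤ → G.E) : Prop :=
  ∀ i : ℤ, G.s (e i) = v i ∧ G.t (e i) = v (i + 1) ∧ G.lab (e i) = x i ∧ v i ∈ S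

/-- The subshift of biinfinite label sequences of biinfinite walks of `G`
staying in `S`. -/
def SigmaIn (G : LGraph A) (S : Set G.V) : Set (ℤ → A) :=
  {x | ∃ v e, G.BiPresIn S x v e}

/-- The sofic subshift `Σ(G)`. -/
def Sigma' (G : LGraph A) : Set (ℤ → A) := G.SigmaIn Set.univ

/-- The linking graph `G/≈` is strongly connected. -/
def StronglyConnectedQuot (G : LGraph A) : Prop := ∀ u v : G.V, G.GenReach u v

/-- The linking graph `G/≈` is periodic : its vertices can be partitioned into
`n > 1` classes (indexed by `ZMod n`, each a union of `≈`-classes) so that every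
edge advances the class index by one. -/
def PeriodicQuot (G : LGraph A) : Prop :=
  ∃ n : ℕ, 1 < n ∧ ∃ c : G.V → ZMod n,
    (∀ u v : G.V, G.Approx u v → c u = c v) ∧ ∀ e : G.E, c (G.t e) = c (G.s e) + 1

/-- The label product `G * H`. -/
def labelProduct (G H : LGraph A) : LGraph A where
  V := G.V × H.V
  E := {p : G.E × H.E // G.lab p.1 = H.lab p.2}
  s := fun p => (G.s p.1.1, H.s p.1.2)
  t := fun p => (G.t p.1.1, H.t p.1.2)
  lab := fun p => G.lab p.1.1

end LGraph

section Subshift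

variable {A : Type}

/-- The shift map `σ`. -/
def shift (x : ℤ → A) : ℤ → A := fun i => x (i + 1)

open Classical in
/-- The metric `ρ(x,y) = 2^{-n}` where `n` is minimal with `x_n ≠ y_n` or
`x_{-n} ≠ y_{-n}` (and `ρ(x,x) = 0`). -/
noncomputable def rho (x y : ℤ → A) : ℝ :=
  if x = y then 0
  else (2 : ℝ) ^ (-((sInf {n : ℕ | ∃ i : ℤ, i.natAbs = n ∧ x i ≠ y i} : ℕ) : ℤ))

/-- Closedness with respect to the metric `rho`. -/
def RhoClosed (Sig : Set (ℤ → A)) : Prop :=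
  ∀ x : ℤ → A, (∀ ε : ℝ, 0 < ε → ∃ y ∈ Sig, rho x y < ε) → x ∈ Sig

/-- A subshift : a closed, strongly shift-invariant subset of `A^ℤ`. -/
def IsSubshift (Sig : Set (ℤ → A)) : Prop :=
  RhoClosed Sig ∧ shift '' Sig = Sig

/-- The language of the subshift `Sig` : all finite factors of its points. -/
def lang (Sig : Set (ℤ → A)) : Set (List A) :=
  {w | ∃ x ∈ Sig, ∃ k : ℤ, ∀ (i : ℕ) (h : i < w.length), w.get ⟨i, h⟩ = x (k + i)}

/-- The central factor `x_{[-l,l]}` of a biinfinite word. -/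
def central (x : ℤ → A) (l : ℕ) : List A :=
  (List.range (2 * l + 1)).map fun i => x ((i : ℤ) - (l : ℤ))

/-- `ChainWord L u v n w` : `w` is a chain of length `n` from `u` to `v` in the
language `L` : `|w| = n + |u|`, `w` has prefix `u` and suffix `v`, and every
factor of `w` of length at most `|u|` belongs to `L`. -/
def ChainWord (L : Set (List A)) (u v : List A) (n : ℕ) (w : List A) : Prop :=
  u.length = v.length ∧ w.length = n + u.length ∧
  w.take u.length = u ∧ w.drop n = v ∧
  ∀ z : List A, z <:+: w → z.length ≤ u.length → z ∈ L

/-- An `ε`-chain of length `n > 0` from `x` to `y` inside `Sig`. -/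
def EpsChain (Sig : Set (ℤ → A)) (ε : ℝ) (n : ℕ) (x y : ℤ → A) : Prop :=
  0 < n ∧ ∃ z : ℕ → ℤ → A, z 0 = x ∧ z n = y ∧ (∀ i ≤ n, z i ∈ Sig) ∧
    ∀ i < n, rho (shift (z i)) (z (i + 1)) < ε

/-- The chain relation of `(Sig, σ)`. -/
def ChainRel (Sig : Set (ℤ → A)) (x y : ℤ → A) : Prop :=
  ∀ ε : ℝ, 0 < ε → ∃ n : ℕ, EpsChain Sig ε n x y

/-- Chain-transitivity. -/
def ChainTransitive (Sig : Set (ℤ → A)) : Prop :=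
  ∀ x ∈ Sig, ∀ y ∈ Sig, ChainRel Sig x y

/-- Chain-mixing. -/
def ChainMixing (Sig : Set (ℤ → A)) : Prop :=
  ∀ x ∈ Sig, ∀ y ∈ Sig, ∀ ε : ℝ, 0 < ε → ∃ k : ℕ, ∀ n, k < n → EpsChain Sig ε n x y

/-- Distance from a point to a set, with respect to `rho`. -/
noncomputable def distTo (x : ℤ → A) (Y : Set (ℤ → A)) : ℝ := sInf (rho x '' Y)

/-- `Y` is an attractor of the dynamical system `(Sig, σ)`. -/
def IsAttractor (Sig Y : Set (ℤ → A)) : Prop :=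
  Y.Nonempty ∧ Y ⊆ Sig ∧ RhoClosed Y ∧ shift '' Y = Y ∧
  (∀ ε : ℝ, 0 < ε → ∃ δ : ℝ, 0 < δ ∧ ∀ x ∈ Sig, distTo x Y < δ →
    ∀ n : ℕ, 0 < n → distTo (shift^[n] x) Y < ε) ∧
  (∃ δ : ℝ, 0 < δ ∧ ∀ x ∈ Sig, distTo x Y < δ →
    Filter.Tendsto (fun n : ℕ => distTo (shift^[n] x) Y) Filter.atTop (nhds 0))

end Subshift

/-! A biinfinite walk only moves forward in the reachability preorder of the finite graph `G`, so
from some index on, and up to some index, it stays in one strongly connected component. Two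
presentations of `x` that both stay in their components read, from a common index at which the
pair of their vertices recurs, the same words of unbounded length; these words lie in both
restricted follower sets, so those two vertices are linked, and the two components are joined
in `G/≈` in both directions. -/

def window {β : Type*} (f : ℤ → β) (i : ℤ) (n : ℕ) : List β :=
  (List.range n).map fun k : ℕ => f (i + k)

section Window

variable {β γ : Type*} (f : ℤ → β) (i : ℤ) (n : ℕ)

@[simp]
theorem length_window : (window f i n).length = n := by
  simp [window]

theorem window_succ : window f i (n + 1) = f i :: window f (i + 1) n := by
  rw [window, List.range_succ_eq_map, List.map_cons, List.map_map, window]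
  congr 1
  · simp
  · refine List.map_congr_left fun k _ => ?_
    simp only [Function.comp_apply, Nat.cast_succ]
    congr 1
    ring

theorem map_window (g : β → γ) : (window f i n).map g = window (g ∘ f) i n := by
  simp [window, Function.comp_def]

theorem mem_window {b : β} : b ∈ window f i n ↔ ∃ k < n, f (i + k) = b := by
  simp [window]

end Window

theorem Filter.exists_frequently_eq {ι V : Type*} [Finite V] {l : Filter ι} [l.NeBot]
    (f : ι → V) : ∃ w, ∃ᶠ i in l, f i = w := by
  by_contra! h
  obtain ⟨i, hi⟩ := (Filter.eventually_all.2 h).exists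
  exact hi (f i) rfl

/-- Some value `w` recurs along `atTop`; past its first occurrence every `f i` is `r`-below a later
occurrence of `w` and every `f j` is `r`-above the first one. -/
theorem Finite.eventually_atTop_forall_rel {ι V : Type*} [Preorder ι] [IsDirected ι (· ≤ ·)]
    [Nonempty ι] [Finite V] {r : V → V → Prop} [IsTrans V r] {f : ι → V}
    (hf : ∀ i j, i ≤ j → r (f i) (f j)) :
    ∀ᶠ N in Filter.atTop, ∀ i ∈ Set.Ici N, ∀ j ∈ Set.Ici N, r (f i) (f j) := by
  obtain ⟨w, hw⟩ := Filter.exists_frequently_eq (l := Filter.atTop) f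
  obtain ⟨N, hN⟩ := hw.exists
  filter_upwards [Filter.eventually_ge_atTop N] with N' hN' i _ j hj
  obtain ⟨m, hm, hmw⟩ := hw.forall_exists_of_atTop i
  exact _root_.trans (hmw ▸ hf i m hm : r (f i) w) (hN ▸ hf N j (hN'.trans hj))

namespace LGraph

variable {A : Type} {G : LGraph A}

instance : IsTrans G.V G.Reach := ⟨fun _ _ _ => Relation.ReflTransGen.trans⟩

theorem SameComp.symm {u w : G.V} (h : G.SameComp u w) : G.SameComp w u := ⟨h.2, h.1⟩

theorem Reach.genReach {u w : G.V} (h : G.Reach u w) : G.GenReach u w :=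
  Relation.ReflTransGen.mono (fun _ _ => Or.inl) _ _ h

theorem Linked.genReach {u w : G.V} (h : G.Linked u w) : G.GenReach u w :=
  .single (Or.inr h)

theorem Linked.symm {u w : G.V} (h : G.Linked u w) : G.Linked w u := by
  rw [Linked, Set.inter_comm]
  exact h

theorem linked_of_forall_exists_le_length {u u' : G.V}
    (h : ∀ n : ℕ, ∃ w ∈ G.FollowR u ∩ G.FollowR u', n ≤ w.length) : G.Linked u u' := by
  refine Set.Infinite.of_image List.length (Set.infinite_of_not_bddAbove fun ⟨b, hb⟩ => ?_)
  obtain ⟨w, hw, hlen⟩ := h (b + 1)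
  have := hb ⟨w, hw, rfl⟩
  omega

namespace BiPresIn

variable {S : Set G.V} {x : ℤ → A} {v : ℤ → G.V} {e : ℤ → G.E}

theorem reach (hp : G.BiPresIn S x v e) {i j : ℤ} (hij : i ≤ j) : G.Reach (v i) (v j) := by
  induction j, hij using Int.leInduction with
  | base => exact .refl
  | succ j _ ih => exact ih.tail ⟨e j, (hp j).1, (hp j).2.1⟩

theorem walk_window (hp : G.BiPresIn S x v e) (n : ℕ) (i : ℤ) :
    G.Walk (v i) (v (i + n)) (window e i n) := by
  induction n generalizing i with
  | zero => simpa [window] using Walk.nil (v i)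
  | succ n ih =>
    rw [window_succ, ← (hp i).1, show i + ↑(n + 1) = i + 1 + n by push_cast; ring]
    exact .cons _ ((hp i).2.1 ▸ ih (i + 1))

theorem window_mem_followR (hp : G.BiPresIn S x v e) {i : ℤ} {n : ℕ}
    (hS : ∀ j ∈ Set.Icc i (i + n), G.SameComp (v i) (v j)) :
    window x i n ∈ G.FollowR (v i) := by
  refine ⟨v (i + n), window e i n, hp.walk_window n i, ?_, fun ed hed => ?_⟩
  · rw [map_window]
    exact congrArg (window · i n) (funext fun j => (hp j).2.2.1)
  · obtain ⟨k, hk, rfl⟩ := (mem_window _ _ _).1 hed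
    rw [(hp _).1, (hp _).2.1]
    exact ⟨hS _ ⟨by omega, by omega⟩, hS _ ⟨by omega, by omega⟩⟩

theorem eventually_atTop_sameComp (hp : G.BiPresIn S x v e) :
    ∀ᶠ N in Filter.atTop, ∀ i ∈ Set.Ici N, ∀ j ∈ Set.Ici N, G.SameComp (v i) (v j) :=
  (Finite.eventually_atTop_forall_rel fun _ _ => hp.reach).mono
    fun _ h i hi j hj => ⟨h i hi j hj, h j hj i hi⟩

theorem eventually_atBot_sameComp (hp : G.BiPresIn S x v e) :
    ∀ᶠ M in Filter.atBot, ∀ i ∈ Set.Iic M, ∀ j ∈ Set.Iic M, G.SameComp (v i) (v j) :=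
  (Finite.eventually_atTop_forall_rel (ι := ℤᵒᵈ) (r := Function.swap G.Reach)
    fun _ _ hij => hp.reach hij).mono fun _ h i hi j hj => ⟨h j hj i hi, h i hi j hj⟩

variable {S' : Set G.V} {v' : ℤ → G.V} {e' : ℤ → G.E} {s : Set ℤ}

/-- Some pair `(v k, v' k)` recurs along `l`; the words of `x` starting at its occurrences,
all of whose vertices stay in `s`, are of unbounded length and lie in both follower sets. -/
theorem exists_linked (hp : G.BiPresIn S x v e) (hq : G.BiPresIn S' x v' e')
    {l : Filter ℤ} [l.NeBot] (hl : ∀ n : ℕ, ∀ᶠ k in l, Set.Icc k (k + n : ℤ) ⊆ s)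
    (hv : ∀ i ∈ s, ∀ j ∈ s, G.SameComp (v i) (v j))
    (hv' : ∀ i ∈ s, ∀ j ∈ s, G.SameComp (v' i) (v' j)) :
    ∃ k ∈ s, G.Linked (v k) (v' k) := by
  obtain ⟨⟨u, u'⟩, hfreq⟩ := Filter.exists_frequently_eq (l := l) fun k => (v k, v' k)
  have hlink : G.Linked u u' := linked_of_forall_exists_le_length fun n => by
    obtain ⟨k, hk, hks⟩ := (hfreq.and_eventually (hl n)).exists
    obtain ⟨rfl, rfl⟩ := Prod.mk.inj hk
    have hkk : k ∈ Set.Icc k (k + n) := ⟨le_rfl, by omega⟩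
    exact ⟨window x k n,
      ⟨hp.window_mem_followR fun j hj => hv k (hks hkk) j (hks hj),
        hq.window_mem_followR fun j hj => hv' k (hks hkk) j (hks hj)⟩, by simp⟩
  obtain ⟨k, hk, hks⟩ := (hfreq.and_eventually (hl 0)).exists
  obtain ⟨rfl, rfl⟩ := Prod.mk.inj hk
  exact ⟨k, hks ⟨le_rfl, by omega⟩, hlink⟩

theorem genReach_of_forall_sameComp (hp : G.BiPresIn S x v e) (hq : G.BiPresIn S' x v' e')
    {l : Filter ℤ} [l.NeBot] (hl : ∀ n : ℕ, ∀ᶠ k in l, Set.Icc k (k + n : ℤ) ⊆ s)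
    (hv : ∀ i ∈ s, ∀ j ∈ s, G.SameComp (v i) (v j))
    (hv' : ∀ i ∈ s, ∀ j ∈ s, G.SameComp (v' i) (v' j)) {i j : ℤ} (hi : i ∈ s) (hj : j ∈ s) :
    G.GenReach (v i) (v' j) ∧ G.GenReach (v' j) (v i) := by
  obtain ⟨k, hk, hlink⟩ := hp.exists_linked hq hl hv hv'
  exact ⟨(hv i hi k hk).1.genReach.trans (hlink.genReach.trans (hv' k hk j hj).1.genReach),
    (hv' j hj k hk).1.genReach.trans (hlink.symm.genReach.trans (hv k hk i hi).1.genReach)⟩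

end BiPresIn

end LGraph

theorem stmt10_general {A : Type} (G : LGraph A) (x : ℤ → A)
    (v v' : ℤ → G.V) (e e' : ℤ → G.E)
    (hp : G.BiPresIn Set.univ x v e) (hq : G.BiPresIn Set.univ x v' e') :
    (∃ N : ℤ, ∀ i j : ℤ, N ≤ i → N ≤ j →
        G.GenReach (v i) (v' j) ∧ G.GenReach (v' j) (v i)) ∧
    (∃ M : ℤ, ∀ i j : ℤ, i ≤ M → j ≤ M →
        G.GenReach (v i) (v' j) ∧ G.GenReach (v' j) (v i)) := by
  constructor
  · obtain ⟨N, hN, hN'⟩ :=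
      (hp.eventually_atTop_sameComp.and hq.eventually_atTop_sameComp).exists
    have hl (n : ℕ) : ∀ᶠ k in Filter.atTop, Set.Icc k (k + n : ℤ) ⊆ Set.Ici N :=
      (Filter.eventually_ge_atTop N).mono fun _ hk _ hj => hk.trans hj.1
    exact ⟨N, fun i j hi hj => hp.genReach_of_forall_sameComp hq hl hN hN' hi hj⟩
  · obtain ⟨M, hM, hM'⟩ :=
      (hp.eventually_atBot_sameComp.and hq.eventually_atBot_sameComp).exists
    have hl (n : ℕ) : ∀ᶠ k in Filter.atBot, Set.Icc k (k + n : ℤ) ⊆ Set.Iic M :=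
      (Filter.eventually_le_atBot (M - n)).mono fun _ hk _ hj =>
        show _ ≤ M by linarith [hj.2]
    exact ⟨M, fun i j hi hj => hp.genReach_of_forall_sameComp hq hl hM hM' hi hj⟩

theorem stmt10 {A : Type} [Finite A] (G : LGraph A) (x : ℤ → A)
    (v v' : ℤ → G.V) (e e' : ℤ → G.E)
    (hp : G.BiPresIn Set.univ x v e) (hq : G.BiPresIn Set.univ x v' e') :
    (∃ N : ℤ, ∀ i j : ℤ, N ≤ i → N ≤ j →
        G.GenReach (v i) (v' j) ∧ G.GenReach (v' j) (v i)) ∧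
    (∃ M : ℤ, ∀ i j : ℤ, i ≤ M → j ≤ M →
        G.GenReach (v i) (v' j) ∧ G.GenReach (v' j) (v i)) :=
  stmt10_general G x v v' e e' hp hq
end

section
/- Let G be an essential labelled graph and let H be a nonempty terminal subgraph of the linking graph G/≈. Then Ω = Σ(π⁻¹(H)) is an attractor of the dynamical system (Σ(G), σ). -/
/-! If `x ∈ Σ(G)` agrees with a point of `Ω = Σ(π⁻¹(H))` on a long central window, then by
pigeonhole the two presentations run, inside that window, around cycles at vertices `u` and `u'`
that carry the same label `c`. All powers of `c` lie in both restricted follower sets, so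
`u ≈ u'`, and `u` lies in `π⁻¹(H)`. Since `H` is terminal, the presentation of `x` never leaves
`π⁻¹(H)` after `u`; repeating a cycle to the left then gives a point of `Ω` that agrees with `x`
on a right half-line. So `σⁿ x` is `2⁻ⁿ`-close to `Ω` uniformly, which gives both stability and
attraction. -/

lemma exists_lt_map_eq_of_finite {B : Type} [Finite B] (f : ℤ → B) (a : ℤ) :
    ∃ p q : ℤ, a ≤ p ∧ p < q ∧ q ≤ a + Nat.card B ∧ f p = f q := by
  have := Fintype.ofFinite B
  obtain ⟨p, hp, q, hq, hpq, heq⟩ := Finset.exists_ne_map_eq_of_card_lt_of_maps_to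
    (s := Finset.Icc a (a + Nat.card B)) (t := Finset.univ) (f := f)
    (by simp only [Int.card_Icc, Finset.card_univ, Nat.card_eq_fintype_card]; omega)
    (fun _ _ => Finset.mem_coe.2 (Finset.mem_univ _))
  rw [Finset.mem_Icc] at hp hq
  rcases hpq.lt_or_gt with h | h
  exacts [⟨p, q, hp.1, h, hq.2, heq⟩, ⟨q, p, hq.1, h, hp.2, heq.symm⟩]

section Metric

variable {A : Type}

lemma rho_nonneg (x y : ℤ → A) : 0 ≤ rho x y := by
  unfold rho
  split_ifs <;> positivity

lemma rho_lt_iff {x y : ℤ → A} {n : ℕ} :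
    rho x y < 2 ^ (-(n : ℤ)) ↔ ∀ i : ℤ, i.natAbs ≤ n → x i = y i := by
  unfold rho
  split_ifs with hxy
  · simp [hxy]
  · set D := {m : ℕ | ∃ i : ℤ, i.natAbs = m ∧ x i ≠ y i}
    have hD : D.Nonempty := by
      obtain ⟨i, hi⟩ := Function.ne_iff.mp hxy
      exact ⟨i.natAbs, i, rfl, hi⟩
    rw [zpow_lt_zpow_iff_right₀ (by norm_num : (1 : ℝ) < 2), neg_lt_neg_iff, Nat.cast_lt]
    constructor
    · intro hlt i hi
      by_contra hne
      have := Nat.sInf_le (show i.natAbs ∈ D from ⟨i, rfl, hne⟩)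
      omega
    · intro hagree
      obtain ⟨i, hi, hne⟩ := Nat.sInf_mem hD
      by_contra! hle
      exact hne (hagree i (by omega))

lemma distTo_nonneg (x : ℤ → A) (Y : Set (ℤ → A)) : 0 ≤ distTo x Y :=
  Real.sInf_nonneg (by rintro r ⟨y, -, rfl⟩; exact rho_nonneg x y)

lemma bddBelow_rho_image (x : ℤ → A) (Y : Set (ℤ → A)) : BddBelow (rho x '' Y) :=
  ⟨0, by rintro r ⟨y, -, rfl⟩; exact rho_nonneg x y⟩

lemma distTo_le_rho {x y : ℤ → A} {Y : Set (ℤ → A)} (hy : y ∈ Y) : distTo x Y ≤ rho x y :=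
  csInf_le (bddBelow_rho_image x Y) ⟨y, hy, rfl⟩

lemma exists_rho_lt_of_distTo_lt {x : ℤ → A} {Y : Set (ℤ → A)} {δ : ℝ} (hY : Y.Nonempty)
    (h : distTo x Y < δ) : ∃ y ∈ Y, rho x y < δ := by
  obtain ⟨-, ⟨y, hy, rfl⟩, hr⟩ := (csInf_lt_iff (bddBelow_rho_image x Y) (hY.image _)).mp h
  exact ⟨y, hy, hr⟩

lemma shift_iterate_apply (n : ℕ) (x : ℤ → A) (i : ℤ) : shift^[n] x i = x (i + n) := by
  induction n generalizing x with
  | zero => simp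
  | succ n ih =>
    rw [Function.iterate_succ_apply, ih]
    simp only [shift]
    congr 1
    push_cast
    ring

end Metric

namespace LGraph

variable {A : Type} {G : LGraph A}

section Walks

lemma Walk.append {u v w : G.V} {l₁ l₂ : List G.E} (h₁ : G.Walk u v l₁) (h₂ : G.Walk v w l₂) :
    G.Walk u w (l₁ ++ l₂) := by
  induction h₁ with
  | nil => exact h₂
  | cons e _ ih => exact Walk.cons e (ih h₂)

lemma Walk.single (e : G.E) : G.Walk (G.s e) (G.t e) [e] :=
  Walk.cons e (Walk.nil _)

lemma Walk.reach {u w : G.V} {es : List G.E} (h : G.Walk u w es) : G.Reach u w := by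
  induction h with
  | nil => exact .refl
  | cons e _ ih => exact .head ⟨e, rfl, rfl⟩ ih

lemma Walk.reach_of_mem {u w : G.V} {es : List G.E} (h : G.Walk u w es) {f : G.E}
    (hf : f ∈ es) : G.Reach u (G.s f) ∧ G.Reach (G.t f) w := by
  induction h with
  | nil => simp at hf
  | cons e h ih =>
    rcases List.mem_cons.mp hf with rfl | hf
    · exact ⟨.refl, h.reach⟩
    · exact ⟨.head ⟨e, rfl, rfl⟩ (ih hf).1, (ih hf).2⟩

lemma Walk.sameComp_of_mem {u : G.V} {es : List G.E} (h : G.Walk u u es) {f : G.E}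
    (hf : f ∈ es) : G.SameComp u (G.s f) ∧ G.SameComp u (G.t f) := by
  obtain ⟨hus, htu⟩ := h.reach_of_mem hf
  have hst : G.EdgeRel (G.s f) (G.t f) := ⟨f, rfl, rfl⟩
  exact ⟨⟨hus, .head hst htu⟩, ⟨.tail hus hst, htu⟩⟩

lemma Walk.flatten_replicate {u : G.V} {es : List G.E} (h : G.Walk u u es) (k : ℕ) :
    G.Walk u u (List.replicate k es).flatten := by
  induction k with
  | zero => exact .nil u
  | succ k ih => exact h.append ih

lemma Walk.map_lab_mem_followR {u : G.V} {es : List G.E} (h : G.Walk u u es) :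
    es.map G.lab ∈ G.FollowR u :=
  ⟨u, es, h, rfl, fun _ hf => h.sameComp_of_mem hf⟩

lemma linked_of_walk_map_lab_eq {u u' : G.V} {es es' : List G.E} (h : G.Walk u u es)
    (h' : G.Walk u' u' es') (hlab : es.map G.lab = es'.map G.lab) (hne : es ≠ []) :
    G.Linked u u' := by
  set c := es.map G.lab
  have hpow : ∀ k, (List.replicate k c).flatten ∈ G.FollowR u ∩ G.FollowR u' := by
    intro k
    refine ⟨?_, ?_⟩
    · simpa [c, List.map_flatten, List.map_replicate] using
        (h.flatten_replicate k).map_lab_mem_followR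
    · simpa [hlab, List.map_flatten, List.map_replicate] using
        (h'.flatten_replicate k).map_lab_mem_followR
  refine Set.infinite_of_injective_forall_mem (fun k₁ k₂ hk => ?_) hpow
  have hc : 0 < c.length := by simpa [c, List.length_pos_iff] using hne
  have := congrArg List.length hk
  simp only [List.length_flatten, List.map_replicate, List.sum_replicate, smul_eq_mul] at this
  exact Nat.eq_of_mul_eq_mul_right hc this

end Walks

section Presentations

variable {S T : Set G.V} {x : ℤ → A} {v : ℤ → G.V} {e : ℤ → G.E}

lemma sigmaIn_subset_sigma' (S : Set G.V) : G.SigmaIn S ⊆ G.Sigma' := by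
  rintro x ⟨v, e, h⟩
  exact ⟨v, e, fun i => ⟨(h i).1, (h i).2.1, (h i).2.2.1, trivial⟩⟩

lemma shift_image_sigmaIn (G : LGraph A) (S : Set G.V) : shift '' G.SigmaIn S = G.SigmaIn S := by
  ext y
  constructor
  · rintro ⟨x, ⟨v, e, h⟩, rfl⟩
    exact ⟨fun i => v (i + 1), fun i => e (i + 1), fun i => h (i + 1)⟩
  · rintro ⟨v, e, h⟩
    refine ⟨fun i => y (i - 1), ⟨fun i => v (i - 1), fun i => e (i - 1), fun i => ?_⟩, ?_⟩
    · simpa using h (i - 1)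
    · funext i
      simp [shift]

lemma shift_iterate_mem_sigmaIn (hx : x ∈ G.SigmaIn S) (n : ℕ) :
    shift^[n] x ∈ G.SigmaIn S := by
  obtain ⟨v, e, h⟩ := hx
  refine ⟨fun i => v (i + n), fun i => e (i + n), fun i => ?_⟩
  simpa only [shift_iterate_apply, add_right_comm i 1] using h (i + n)

lemma walk_window (hx : G.BiPresIn T x v e) (p : ℤ) (n : ℕ) :
    G.Walk (v p) (v (p + n)) ((List.range n).map fun i : ℕ => e (p + i)) := by
  induction n with
  | zero => simpa using Walk.nil (v p)
  | succ n ih =>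
    rw [List.range_succ, List.map_append, List.map_singleton]
    have hstep := Walk.single (e (p + n))
    rw [(hx _).1, (hx _).2.1] at hstep
    exact ih.append (by push_cast; rwa [← add_assoc])

lemma ForwardClosed.mem_of_le (hterm : G.ForwardClosed S) (hx : G.BiPresIn T x v e) {p : ℤ}
    (hp : v p ∈ S) {j : ℤ} (hj : p ≤ j) : v j ∈ S := by
  induction j, hj using Int.leInduction with
  | base => exact hp
  | succ j _ ih =>
    rw [← (hx j).2.1]
    exact hterm _ ((hx j).1 ▸ ih)

/-- A repeated pair `(v i, v' i)` closes two cycles with a common label, so `v i` is linked to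
`v' i ∈ S`. -/
lemma exists_mem_saturated_of_agree (hsat : G.SaturatedSet S)
    {ω : ℤ → A} {v' : ℤ → G.V} {e' : ℤ → G.E}
    (hx : G.BiPresIn T x v e) (hω : G.BiPresIn S ω v' e') (a : ℤ)
    (hagree : ∀ i, a ≤ i → i < a + Nat.card G.V * Nat.card G.V → x i = ω i) :
    ∃ j, a ≤ j ∧ j ≤ a + Nat.card G.V * Nat.card G.V ∧ v j ∈ S := by
  obtain ⟨p, q, hap, hpq, hqa, heq⟩ := exists_lt_map_eq_of_finite (fun i => (v i, v' i)) a
  rw [Nat.card_prod] at hqa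
  obtain ⟨d, rfl⟩ : ∃ d : ℕ, q = p + d := ⟨(q - p).toNat, by omega⟩
  obtain ⟨hv, hv'⟩ := Prod.mk.inj heq
  have hcyc := walk_window hx p d
  have hcyc' := walk_window hω p d
  rw [← hv] at hcyc
  rw [← hv'] at hcyc'
  have hlab : ((List.range d).map fun i : ℕ => e (p + i)).map G.lab =
      ((List.range d).map fun i : ℕ => e' (p + i)).map G.lab := by
    simp only [List.map_map]
    refine List.map_congr_left fun i hi => ?_
    rw [List.mem_range] at hi
    simp only [Function.comp_apply, (hx _).2.2.1, (hω _).2.2.1]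
    exact hagree _ (by omega) (by omega)
  have hne : ((List.range d).map fun i : ℕ => e (p + i)) ≠ [] := by
    simpa [List.range_eq_nil] using (show d ≠ 0 by omega)
  have hlink := linked_of_walk_map_lab_eq hcyc hcyc' hlab hne
  exact ⟨p, hap, by omega, (hsat _ _ (.single hlink)).2 (hω p).2.2.2⟩

/-- Extend to the left by repeating forever the first cycle of the ray. -/
lemma exists_sigmaIn_eq_of_ray {J : ℤ}
    (hx : ∀ i, J ≤ i →
      G.s (e i) = v i ∧ G.t (e i) = v (i + 1) ∧ G.lab (e i) = x i ∧ v i ∈ S) :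
    ∃ P, P ≤ J + Nat.card G.V ∧ ∃ ω ∈ G.SigmaIn S, ∀ i, P ≤ i → ω i = x i := by
  obtain ⟨p, q, hJp, hpq, hqJ, heq⟩ := exists_lt_map_eq_of_finite v J
  set d := q - p
  let ψ : ℤ → ℤ := fun i => if p ≤ i then i else p + (i - p) % d
  have hψ_ge : ∀ i, p ≤ ψ i := by
    intro i
    simp only [ψ]
    split_ifs
    · assumption
    · have := Int.emod_nonneg (i - p) (show d ≠ 0 by omega)
      omega
  have hψ_succ : ∀ i, v (ψ i + 1) = v (ψ (i + 1)) := by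
    intro i
    by_cases hi : p ≤ i
    · simp only [ψ, if_pos hi, if_pos (show p ≤ i + 1 by omega)]
    have hψi : ψ i = p + (i - p) % d := if_neg hi
    have hψi1 : ψ (i + 1) = p + ((i - p) % d + 1) % d := by
      rw [Int.emod_add_emod, show i - p + 1 = i + 1 - p by ring]
      simp only [ψ]
      split_ifs with h
      · simp [show i + 1 = p by omega]
      · rfl
    have hr := Int.emod_nonneg (i - p) (show d ≠ 0 by omega)
    have hr' := Int.emod_lt_of_pos (i - p) (show 0 < d by omega)
    rw [hψi, hψi1]
    rcases (show (i - p) % d + 1 < d ∨ (i - p) % d + 1 = d by omega) with h | h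
    · rw [Int.emod_eq_of_lt (by omega) h, add_assoc]
    · rw [h, Int.emod_self, add_zero, show p + (i - p) % d + 1 = q by omega, heq]
  refine ⟨p, by omega, x ∘ ψ, ⟨v ∘ ψ, e ∘ ψ, fun i => ?_⟩, fun i hi => by simp [ψ, hi]⟩
  obtain ⟨hs, ht, hl, hS⟩ := hx (ψ i) (hJp.trans (hψ_ge i))
  exact ⟨hs, ht.trans (hψ_succ i), hl, hS⟩

lemma sigmaIn_nonempty (hG : G.Essential) (hterm : G.ForwardClosed S) (hne : S.Nonempty) :
    (G.SigmaIn S).Nonempty := by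
  obtain ⟨v₀, hv₀⟩ := hne
  choose out hout using fun w => (hG w).2
  let next : G.V → G.V := fun w => G.t (out w)
  have hmem : ∀ n, next^[n] v₀ ∈ S := by
    intro n
    induction n with
    | zero => exact hv₀
    | succ n ih =>
      rw [Function.iterate_succ_apply']
      exact hterm _ ((hout _).symm ▸ ih)
  have hray : ∀ i : ℤ, 0 ≤ i →
      G.s (out (next^[i.toNat] v₀)) = next^[i.toNat] v₀ ∧
      G.t (out (next^[i.toNat] v₀)) = next^[(i + 1).toNat] v₀ ∧
      G.lab (out (next^[i.toNat] v₀)) = G.lab (out (next^[i.toNat] v₀)) ∧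
      next^[i.toNat] v₀ ∈ S := fun i hi =>
    ⟨hout _, by rw [show (i + 1).toNat = i.toNat + 1 by omega, Function.iterate_succ_apply'],
      rfl, hmem _⟩
  obtain ⟨-, -, ω, hω, -⟩ := exists_sigmaIn_eq_of_ray hray
  exact ⟨ω, hω⟩

/-- Presentations of approximants converge coordinatewise along an ultrafilter, since there
are only finitely many vertices and edges. -/
lemma rhoClosed_sigmaIn (G : LGraph A) (S : Set G.V) : RhoClosed (G.SigmaIn S) := by
  intro x hx
  choose y hy hxy using fun n : ℕ => hx (2 ^ (-(n : ℤ))) (by positivity)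
  choose v e hpres using hy
  let U := Ultrafilter.of (Filter.atTop : Filter ℕ)
  have hlim : ∀ {B : Type} [Finite B] (f : ℕ → ℤ → B) (i : ℤ),
      ∃ b, ∀ᶠ n in (U : Filter ℕ), f n i = b :=
    fun f i => Ultrafilter.eventually_exists_iff.mp (.of_forall fun n => ⟨f n i, rfl⟩)
  choose v₀ hv₀ using hlim v
  choose e₀ he₀ using hlim e
  refine ⟨v₀, e₀, fun i => ?_⟩
  have hfar : ∀ᶠ n in (U : Filter ℕ), i.natAbs ≤ n :=
    Ultrafilter.of_le _ (Filter.eventually_ge_atTop _)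
  obtain ⟨n, hvn, hvn', hen, hn⟩ := ((hv₀ i).and ((hv₀ (i + 1)).and ((he₀ i).and hfar))).exists
  obtain ⟨hs, ht, hl, hS⟩ := hpres n i
  rw [← hen, ← hvn, ← hvn']
  exact ⟨hs, ht, hl.trans (rho_lt_iff.mp (hxy n) i hn).symm, hS⟩

lemma exists_sigmaIn_eq_of_distTo_lt (hsat : G.SaturatedSet S) (hterm : G.ForwardClosed S)
    (hΩ : (G.SigmaIn S).Nonempty) (m : ℕ) :
    ∃ δ > 0, ∀ x ∈ G.Sigma', distTo x (G.SigmaIn S) < δ →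
      ∃ ω ∈ G.SigmaIn S, ∀ i, -(m : ℤ) ≤ i → ω i = x i := by
  obtain ⟨L, hL⟩ : ∃ L : ℕ, L = Nat.card G.V * Nat.card G.V + Nat.card G.V + m := ⟨_, rfl⟩
  refine ⟨2 ^ (-(L : ℤ)), by positivity, fun x ⟨v, e, hx⟩ hdist => ?_⟩
  obtain ⟨ω₀, ⟨v', e', hω₀⟩, hρ⟩ := exists_rho_lt_of_distTo_lt hΩ hdist
  set a : ℤ := -(L : ℤ)
  obtain ⟨j, -, hj, hvj⟩ := exists_mem_saturated_of_agree hsat hx hω₀ a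
    fun i h₁ h₂ => rho_lt_iff.mp hρ i (by omega)
  have hray : ∀ i, a + Nat.card G.V * Nat.card G.V ≤ i →
      G.s (e i) = v i ∧ G.t (e i) = v (i + 1) ∧ G.lab (e i) = x i ∧ v i ∈ S := fun i hi =>
    ⟨(hx i).1, (hx i).2.1, (hx i).2.2.1, hterm.mem_of_le hx hvj (by omega)⟩
  obtain ⟨P, hP, ω, hω, hωx⟩ := exists_sigmaIn_eq_of_ray hray
  exact ⟨ω, hω, fun i hi => hωx i (by omega)⟩

lemma exists_distTo_shift_iterate_lt (hsat : G.SaturatedSet S) (hterm : G.ForwardClosed S)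
    (hΩ : (G.SigmaIn S).Nonempty) (m : ℕ) :
    ∃ δ > 0, ∀ x ∈ G.Sigma', distTo x (G.SigmaIn S) < δ →
      ∀ n : ℕ, distTo (shift^[n] x) (G.SigmaIn S) < 2⁻¹ ^ (m + n) := by
  obtain ⟨δ, hδ, h⟩ := exists_sigmaIn_eq_of_distTo_lt hsat hterm hΩ m
  refine ⟨δ, hδ, fun x hx hdist n => ?_⟩
  obtain ⟨ω, hω, hωx⟩ := h x hx hdist
  calc distTo (shift^[n] x) (G.SigmaIn S)
      ≤ rho (shift^[n] x) (shift^[n] ω) := distTo_le_rho (shift_iterate_mem_sigmaIn hω n)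
    _ < 2 ^ (-((m + n : ℕ) : ℤ)) := rho_lt_iff.mpr fun i hi => by
        simp only [shift_iterate_apply]
        exact (hωx _ (by omega)).symm
    _ = 2⁻¹ ^ (m + n) := by rw [zpow_neg, zpow_natCast, inv_pow]

end Presentations

end LGraph

theorem stmt14_general {A : Type} (G : LGraph A) (hG : G.Essential)
    (S : Set G.V) (hne : S.Nonempty)
    (hsat : G.SaturatedSet S) (hterm : G.ForwardClosed S) :
    IsAttractor G.Sigma' (G.SigmaIn S) := by
  have hΩ := LGraph.sigmaIn_nonempty hG hterm hne
  have hattract := LGraph.exists_distTo_shift_iterate_lt hsat hterm hΩ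
  refine ⟨hΩ, LGraph.sigmaIn_subset_sigma' S, LGraph.rhoClosed_sigmaIn G S,
    LGraph.shift_image_sigmaIn G S, ?_, ?_⟩
  · intro ε hε
    obtain ⟨m, hm⟩ := exists_pow_lt_of_lt_one hε (inv_lt_one_of_one_lt₀ one_lt_two)
    obtain ⟨δ, hδ, h⟩ := hattract m
    refine ⟨δ, hδ, fun x hx hdist n _ => (h x hx hdist n).trans_le ?_ |>.trans hm⟩
    exact pow_le_pow_of_le_one (by norm_num) (by norm_num) (by omega)
  · obtain ⟨δ, hδ, h⟩ := hattract 0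
    refine ⟨δ, hδ, fun x hx hdist => ?_⟩
    refine squeeze_zero (fun n => distTo_nonneg _ _) (fun n => (h x hx hdist n).le) ?_
    simpa using tendsto_pow_atTop_nhds_zero_of_lt_one (by norm_num : (0 : ℝ) ≤ 2⁻¹) (by norm_num)

theorem stmt14 {A : Type} [Finite A] (G : LGraph A) (hG : G.Essential)
    (S : Set G.V) (hne : S.Nonempty)
    (hsat : G.SaturatedSet S) (hterm : G.ForwardClosed S) :
    IsAttractor G.Sigma' (G.SigmaIn S) :=
  stmt14_general G hG S hne hsat hterm
end
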